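/- Under assumption H1, the function g̃ is differentiable on (0,T] and there exists a constant C > 0 such that |g̃'(t)| ≤ C t^{−α₀} (1 + |ln t|) for all t ∈ (0,T]; consequently g̃' is Lebesgue integrable on (0,T). -/

import Mathlib

/-- Real digamma function ψ = Γ'/Γ. -/
noncomputable def digamma (x : ℝ) : ℝ := deriv Real.Gamma x / Real.Gamma x

/-- The perturbation function
`g̃(t) = ∫₀ᵗ (t^(-α z) / Γ(1 - α z)) (-α'(z) ln t + ψ(1 - α z) α'(z)) dz`. -/
noncomputable def gtilde (α : ℝ → ℝ) (t : ℝ) : ℝ :=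
  ∫ z in (0:ℝ)..t, (t ^ (-(α z)) / Real.Gamma (1 - α z)) *
    (-(deriv α z) * Real.log t + digamma (1 - α z) * deriv α z)

open Real Set

lemma ofReal_ne_neg_nat {x : ℝ} (hx : 0 < x) : ∀ m : ℕ, (x:ℂ) ≠ -m := by
  intro m h
  have : x = -(m:ℝ) := by exact_mod_cast congrArg Complex.re h
  have : (0:ℝ) ≤ (m:ℝ) := Nat.cast_nonneg m
  linarith [hx.trans_eq ‹x = -(m:ℝ)›]

lemma real_ne_neg_nat {x : ℝ} (hx : 0 < x) : ∀ m : ℕ, x ≠ -m := by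
  intro m h
  have : (0:ℝ) ≤ (m:ℝ) := Nat.cast_nonneg m
  linarith [hx.trans_eq h]

lemma deriv_realGamma_eq {x : ℝ} (hx : 0 < x) :
    deriv Real.Gamma x = (deriv Complex.Gamma x).re := by
  have h := (Complex.differentiableAt_Gamma _ (ofReal_ne_neg_nat hx)).hasDerivAt.real_of_complex
  have heq : (fun y : ℝ => (Complex.Gamma (y:ℂ)).re) = Real.Gamma := by
    funext y; rw [Complex.Gamma_ofReal, Complex.ofReal_re]
  rw [heq] at h
  exact h.deriv

lemma continuousAt_deriv_complexGamma {s : ℂ} (hs : 0 < s.re) :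
    ContinuousAt (deriv Complex.Gamma) s := by
  have hopen : IsOpen {z : ℂ | 0 < z.re} := isOpen_lt continuous_const Complex.continuous_re
  have hdiff : DifferentiableOn ℂ Complex.Gamma {z : ℂ | 0 < z.re} := fun z hz =>
    (Complex.differentiableAt_Gamma z (fun m => by
      intro h
      rw [h] at hz
      simp only [mem_setOf_eq, Complex.neg_re, Complex.natCast_re] at hz
      have : (0:ℝ) ≤ (m:ℝ) := Nat.cast_nonneg m
      linarith)).differentiableWithinAt
  have han : AnalyticOnNhd ℂ Complex.Gamma {z : ℂ | 0 < z.re} :=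
    hdiff.analyticOnNhd hopen
  exact (han.deriv s hs).continuousAt


lemma continuousAt_deriv_realGamma {x : ℝ} (hx : 0 < x) :
    ContinuousAt (deriv Real.Gamma) x := by
  have h1 : ContinuousAt (fun y : ℝ => (deriv Complex.Gamma (y:ℂ)).re) x :=
    Complex.continuous_re.continuousAt.comp
      ((continuousAt_deriv_complexGamma (by simpa using hx)).comp
        Complex.continuous_ofReal.continuousAt)
  have heq : deriv Real.Gamma =ᶠ[nhds x] fun y : ℝ => (deriv Complex.Gamma (y:ℂ)).re :=
    Filter.eventuallyEq_of_mem (Ioi_mem_nhds hx) (fun y hy => deriv_realGamma_eq hy)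
  exact h1.congr heq.symm


lemma hasDerivAt_inner (α : ℝ → ℝ) (hsmooth : ContDiff ℝ 3 α) {t : ℝ} (ht : 0 < t)
    {z : ℝ} (h0 : 0 < α z) (h1 : α z < 1) :
    HasDerivAt (fun z => t ^ (-(α z)) / Real.Gamma (1 - α z))
      ((t ^ (-(α z)) / Real.Gamma (1 - α z)) *
        (-(deriv α z) * Real.log t + digamma (1 - α z) * deriv α z)) z := by
  have hα : HasDerivAt α (deriv α z) z :=
    ((hsmooth.differentiable (by norm_num)) z).hasDerivAt
  have hnum : HasDerivAt (fun z => t ^ (-(α z)))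
      (t ^ (-(α z)) * Real.log t * (-(deriv α z))) z := by
    have hb : HasDerivAt (fun y : ℝ => t ^ y) (t ^ (-(α z)) * Real.log t) (-(α z)) :=
      (Real.hasStrictDerivAt_const_rpow ht (-(α z))).hasDerivAt
    exact hb.comp z hα.neg
  have hden : HasDerivAt (fun z => Real.Gamma (1 - α z))
      (deriv Real.Gamma (1 - α z) * (-(deriv α z))) z := by
    have hg : HasDerivAt Real.Gamma (deriv Real.Gamma (1 - α z)) (1 - α z) :=
      (Real.differentiableAt_Gamma (real_ne_neg_nat (by linarith))).hasDerivAt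
    exact hg.comp z (hα.const_sub 1)
  have hΓ : Real.Gamma (1 - α z) ≠ 0 := (Real.Gamma_pos_of_pos (by linarith)).ne'
  refine (hnum.div hden hΓ).congr_deriv ?_
  unfold digamma
  field_simp
  ring


lemma integrand_continuousOn (α : ℝ → ℝ) (hsmooth : ContDiff ℝ 3 α) {t : ℝ} (ht : 0 < t)
    (s : Set ℝ) (hs : ∀ z ∈ s, 0 < α z ∧ α z < 1) :
    ContinuousOn (fun z => (t ^ (-(α z)) / Real.Gamma (1 - α z)) *
      (-(deriv α z) * Real.log t + digamma (1 - α z) * deriv α z)) s := by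
  intro z hz
  obtain ⟨h0, h1⟩ := hs z hz
  have hαc : ContinuousAt α z := hsmooth.continuous.continuousAt
  have hdc : ContinuousAt (deriv α) z :=
    (hsmooth.continuous_deriv (by norm_num)).continuousAt
  have h1c : ContinuousAt (fun z => (1:ℝ) - α z) z := continuousAt_const.sub hαc
  have hpow : ContinuousAt (fun z => t ^ (-(α z))) z :=
    (Real.continuousAt_const_rpow ht.ne').comp hαc.neg
  have hΓpos : 0 < Real.Gamma (1 - α z) := Real.Gamma_pos_of_pos (by linarith)
  have hΓc : ContinuousAt (fun z => Real.Gamma (1 - α z)) z :=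
    ((Real.differentiableAt_Gamma (real_ne_neg_nat (by linarith))).continuousAt).comp h1c
  have hψc : ContinuousAt (fun z => digamma (1 - α z)) z := by
    unfold digamma
    exact ((continuousAt_deriv_realGamma (by linarith)).comp h1c).div hΓc hΓpos.ne'
  exact ((hpow.div hΓc hΓpos.ne').mul
    ((hdc.neg.mul continuousAt_const).add (hψc.mul hdc))).continuousWithinAt

lemma closed_form (α : ℝ → ℝ) (hsmooth : ContDiff ℝ 3 α) {T1 : ℝ}
    (hr : ∀ z ∈ Icc (0:ℝ) T1, 0 < α z ∧ α z < 1) {t : ℝ} (ht : 0 < t) (htT : t ≤ T1) :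
    gtilde α t = t ^ (-(α t)) / Real.Gamma (1 - α t)
      - t ^ (-(α 0)) / Real.Gamma (1 - α 0) := by
  unfold gtilde
  apply intervalIntegral.integral_eq_sub_of_hasDerivAt
    (f := fun x => t ^ (-(α x)) / Real.Gamma (1 - α x))
  · intro x hx
    rw [uIcc_of_le ht.le] at hx
    have hx' : x ∈ Icc (0:ℝ) T1 := ⟨hx.1, hx.2.trans htT⟩
    exact hasDerivAt_inner α hsmooth ht (hr x hx').1 (hr x hx').2
  · apply ContinuousOn.intervalIntegrable
    rw [uIcc_of_le ht.le]
    exact integrand_continuousOn α hsmooth ht _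
      (fun z hz => hr z ⟨hz.1, hz.2.trans htT⟩)

lemma hasDerivAt_closed (α : ℝ → ℝ) (hsmooth : ContDiff ℝ 3 α) {t : ℝ} (ht : 0 < t)
    (h0t : 0 < α t) (h1t : α t < 1) (h00 : 0 < α 0) (h10 : α 0 < 1) :
    HasDerivAt (fun s => s ^ (-(α s)) / Real.Gamma (1 - α s)
        - s ^ (-(α 0)) / Real.Gamma (1 - α 0))
      ((t ^ (-(α t)) / Real.Gamma (1 - α t)) * (deriv α t)
          * (digamma (1 - α t) - Real.log t)
        - ((α t) * t ^ (-(α t)) / Real.Gamma (1 - α t)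
           - (α 0) * t ^ (-(α 0)) / Real.Gamma (1 - α 0)) / t) t := by
  have hα : HasDerivAt α (deriv α t) t := ((hsmooth.differentiable (by norm_num)) t).hasDerivAt
  have hu : HasDerivAt (fun s => Real.log s * (-(α s)))
      (t⁻¹ * (-(α t)) + Real.log t * (-(deriv α t))) t :=
    (Real.hasDerivAt_log ht.ne').mul hα.neg
  have hnum : HasDerivAt (fun s => s ^ (-(α s)))
      (t ^ (-(α t)) * (t⁻¹ * (-(α t)) + Real.log t * (-(deriv α t)))) t := by
    have he : HasDerivAt (fun s => Real.exp (Real.log s * (-(α s))))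
        (Real.exp (Real.log t * (-(α t))) * (t⁻¹ * (-(α t)) + Real.log t * (-(deriv α t)))) t :=
      hu.exp
    have heq : (fun s => Real.exp (Real.log s * (-(α s)))) =ᶠ[nhds t]
        (fun s => s ^ (-(α s))) :=
      Filter.eventuallyEq_of_mem (Ioi_mem_nhds ht)
        (fun x hx => (Real.rpow_def_of_pos hx _).symm)
    have := he.congr_of_eventuallyEq heq.symm
    rwa [← Real.rpow_def_of_pos ht] at this
  have hden : HasDerivAt (fun s => Real.Gamma (1 - α s))
      (deriv Real.Gamma (1 - α t) * (-(deriv α t))) t := by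
    have hg : HasDerivAt Real.Gamma (deriv Real.Gamma (1 - α t)) (1 - α t) :=
      (Real.differentiableAt_Gamma (real_ne_neg_nat (by linarith))).hasDerivAt
    exact hg.comp t (hα.const_sub 1)
  have hΓ : Real.Gamma (1 - α t) ≠ 0 := (Real.Gamma_pos_of_pos (by linarith)).ne'
  have hΓ0 : Real.Gamma (1 - α 0) ≠ 0 := (Real.Gamma_pos_of_pos (by linarith)).ne'
  have hconst : HasDerivAt (fun s : ℝ => s ^ (-(α 0)) / Real.Gamma (1 - α 0))
      ((-(α 0)) * t ^ (-(α 0) - 1) / Real.Gamma (1 - α 0)) t :=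
    (Real.hasDerivAt_rpow_const (Or.inl ht.ne')).div_const _
  refine ((hnum.div hden hΓ).sub hconst).congr_deriv ?_
  unfold digamma
  rw [show (-(α 0) - 1) = (-(α 0)) - 1 by ring, Real.rpow_sub ht, Real.rpow_one]
  field_simp
  ring

lemma hasDerivAt_F {t a : ℝ} (ht : 0 < t) (h0 : 0 < a) (h1 : a < 1) :
    HasDerivAt (fun a => a * (t ^ (-a) / Real.Gamma (1 - a)))
      (t ^ (-a) / Real.Gamma (1 - a) * (1 + a * (digamma (1 - a) - Real.log t))) a := by
  have hnum : HasDerivAt (fun a : ℝ => t ^ (-a)) (t ^ (-a) * Real.log t * (-1)) a := by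
    have hb : HasDerivAt (fun y : ℝ => t ^ y) (t ^ (-a) * Real.log t) (-a) :=
      (Real.hasStrictDerivAt_const_rpow ht (-a)).hasDerivAt
    exact hb.comp a (hasDerivAt_neg a)
  have hden : HasDerivAt (fun a : ℝ => Real.Gamma (1 - a)) (deriv Real.Gamma (1 - a) * (-1)) a := by
    have hg : HasDerivAt Real.Gamma (deriv Real.Gamma (1 - a)) (1 - a) :=
      (Real.differentiableAt_Gamma (real_ne_neg_nat (by linarith))).hasDerivAt
    have : HasDerivAt (fun a : ℝ => 1 - a) (-1) a := by
      simpa using (hasDerivAt_id a).const_sub 1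
    exact hg.comp a this
  have hΓ : Real.Gamma (1 - a) ≠ 0 := (Real.Gamma_pos_of_pos (by linarith)).ne'
  refine ((hasDerivAt_id a).mul (hnum.div hden hΓ)).congr_deriv ?_
  unfold digamma
  simp only [Pi.div_apply, id_eq]
  field_simp
  ring

lemma log_bound_aux {t T : ℝ} (ht : 0 < t) (htT : t ≤ T) :
    t * |Real.log t| ≤ 1 + T * |Real.log T| := by
  rcases le_or_gt t 1 with h | h
  · have hlog : Real.log t ≤ 0 := Real.log_nonpos ht.le h
    have : -Real.log t ≤ t⁻¹ := by
      have := Real.log_le_sub_one_of_pos (inv_pos.mpr ht)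
      rw [Real.log_inv] at this
      linarith [this, inv_pos.mpr ht]
    have h1 : t * |Real.log t| ≤ t * t⁻¹ := by
      rw [abs_of_nonpos hlog]
      exact mul_le_mul_of_nonneg_left this ht.le
    rw [mul_inv_cancel₀ ht.ne'] at h1
    have : 0 ≤ T * |Real.log T| := mul_nonneg (ht.trans_le htT).le (abs_nonneg _)
    linarith
  · have hlogt : 0 ≤ Real.log t := Real.log_nonneg h.le
    have hlogT : Real.log t ≤ Real.log T := Real.log_le_log ht htT
    have h1 : t * |Real.log t| ≤ T * |Real.log T| := by
      rw [abs_of_nonneg hlogt, abs_of_nonneg (hlogt.trans hlogT)]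
      exact mul_le_mul htT hlogT hlogt (ht.trans_le htT).le
    linarith

lemma rpow_bound_aux {t T L a b : ℝ} (ht : 0 < t) (htT : t ≤ T) (hab : |a - b| ≤ L * t)
    (hL : 0 ≤ L) :
    t ^ (-a) ≤ Real.exp (L * (1 + T * |Real.log T|)) * t ^ (-b) := by
  have key : t ^ (-a) = t ^ (b - a) * t ^ (-b) := by
    rw [← Real.rpow_add ht]; ring_nf
  rw [key]
  have h2 : t ^ (b - a) ≤ Real.exp (L * (1 + T * |Real.log T|)) := by
    rw [Real.rpow_def_of_pos ht]
    apply Real.exp_le_exp.mpr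
    calc Real.log t * (b - a) ≤ |Real.log t * (b - a)| := le_abs_self _
      _ = |b - a| * |Real.log t| := by rw [abs_mul]; ring
      _ = |a - b| * |Real.log t| := by rw [abs_sub_comm]
      _ ≤ (L * t) * |Real.log t| := mul_le_mul_of_nonneg_right hab (abs_nonneg _)
      _ = L * (t * |Real.log t|) := by ring
      _ ≤ L * (1 + T * |Real.log T|) := mul_le_mul_of_nonneg_left (log_bound_aux ht htT) hL
  exact mul_le_mul_of_nonneg_right h2 (Real.rpow_nonneg ht.le _)

set_option maxHeartbeats 2000000

/-- under assumption H1, `g̃` is differentiable on `(0,T]` and there is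
`C > 0` with `|g̃'(t)| ≤ C t^(-α₀) (1 + |ln t|)` on `(0,T]`; consequently `g̃'` is
Lebesgue integrable on `(0,T)`. -/
theorem stmt_4 (T L : ℝ) (hT : 0 < T) (hL : 0 < L) (α : ℝ → ℝ)
    (hsmooth : ContDiff ℝ 3 α)
    (hrange : ∀ t ∈ Set.Icc (0:ℝ) T, 0 < α t ∧ α t < 1)
    (hbound : ∀ t ∈ Set.Icc (0:ℝ) T,
      |deriv α t| + |iteratedDeriv 2 α t| + |iteratedDeriv 3 α t| ≤ L) :
    (∀ t ∈ Set.Ioc (0:ℝ) T, DifferentiableAt ℝ (gtilde α) t) ∧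
    (∃ C > 0, ∀ t ∈ Set.Ioc (0:ℝ) T,
      |deriv (gtilde α) t| ≤ C * t ^ (-(α 0)) * (1 + |Real.log t|)) ∧
    MeasureTheory.IntegrableOn (deriv (gtilde α)) (Set.Ioc 0 T) := by
  obtain ⟨h00, h10⟩ := hrange 0 ⟨le_refl 0, hT.le⟩
  -- derivative bound for α
  have hαL : ∀ x ∈ Icc (0:ℝ) T, |deriv α x| ≤ L := by
    intro x hx
    have := hbound x hx
    have h2 := abs_nonneg (iteratedDeriv 2 α x)
    have h3 := abs_nonneg (iteratedDeriv 3 α x)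
    linarith
  -- extend the range hypothesis beyond T
  have hUopen : IsOpen {x : ℝ | 0 < α x ∧ α x < 1} := by
    have h : {x : ℝ | 0 < α x ∧ α x < 1} = α ⁻¹' (Set.Ioo 0 1) := by
      ext x; simp [Set.mem_Ioo]
    rw [h]; exact isOpen_Ioo.preimage hsmooth.continuous
  obtain ⟨ε, hε, hball⟩ := Metric.mem_nhds_iff.mp
    (hUopen.mem_nhds (hrange T ⟨hT.le, le_refl T⟩))
  have hTT1 : T < T + ε/2 := by linarith
  set T1 : ℝ := T + ε/2 with hT1def
  have hr1 : ∀ z ∈ Icc (0:ℝ) T1, 0 < α z ∧ α z < 1 := by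
    intro z hz
    rcases le_or_gt z T with h | h
    · exact hrange z ⟨hz.1, h⟩
    · apply hball
      rw [Metric.mem_ball, Real.dist_eq, abs_lt]
      constructor
      · linarith [hz.1]
      · have := hz.2
        rw [hT1def] at this
        linarith
  -- Lipschitz bound |α t - α 0| ≤ L t
  have hLip : ∀ t ∈ Icc (0:ℝ) T, |α t - α 0| ≤ L * t := by
    intro t htm
    have h := Convex.norm_image_sub_le_of_norm_deriv_le (𝕜 := ℝ) (s := Icc (0:ℝ) T)
      (fun x _ => (hsmooth.differentiable (by norm_num)) x)
      (fun x hx => by rw [Real.norm_eq_abs]; exact hαL x hx)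
      (convex_Icc 0 T) ⟨le_refl 0, hT.le⟩ htm
    rw [Real.norm_eq_abs, Real.norm_eq_abs, sub_zero, abs_of_nonneg htm.1] at h
    exact h
  -- extreme values of α on Icc 0 T1
  have hne : (Icc (0:ℝ) T1).Nonempty := ⟨0, le_refl 0, by linarith⟩
  obtain ⟨zm, hzm, hmin⟩ := isCompact_Icc.exists_isMinOn hne hsmooth.continuous.continuousOn
  obtain ⟨zM, hzM, hmax⟩ := isCompact_Icc.exists_isMaxOn hne hsmooth.continuous.continuousOn
  set m : ℝ := α zm with hmdef
  set M : ℝ := α zM with hMdef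
  have hm0 : 0 < m := (hr1 zm hzm).1
  have hM1 : M < 1 := (hr1 zM hzM).2
  have hmem : ∀ z ∈ Icc (0:ℝ) T1, α z ∈ Icc m M :=
    fun z hz => ⟨isMinOn_iff.mp hmin z hz, isMaxOn_iff.mp hmax z hz⟩
  -- bound B on the compact interval
  have hcontB : ContinuousOn (fun a => |1 / Real.Gamma (1-a)| + |digamma (1-a)|)
      (Icc m M) := by
    intro a ha
    have ha0 : 0 < a := lt_of_lt_of_le hm0 ha.1
    have ha1 : a < 1 := lt_of_le_of_lt ha.2 hM1
    have hΓpos : 0 < Real.Gamma (1 - a) := Real.Gamma_pos_of_pos (by linarith)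
    have h1c : ContinuousAt (fun a : ℝ => (1:ℝ) - a) a := continuousAt_const.sub continuousAt_id
    have hΓc : ContinuousAt (fun a : ℝ => Real.Gamma (1 - a)) a :=
      ((Real.differentiableAt_Gamma (real_ne_neg_nat (by linarith))).continuousAt).comp h1c
    have hψc : ContinuousAt (fun a : ℝ => digamma (1 - a)) a := by
      unfold digamma
      exact ((continuousAt_deriv_realGamma (by linarith)).comp h1c).div hΓc hΓpos.ne'
    exact (((continuousAt_const.div hΓc hΓpos.ne').abs).add hψc.abs).continuousWithinAt
  obtain ⟨B', hB'⟩ := isCompact_Icc.exists_bound_of_continuousOn hcontB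
  set B : ℝ := max B' 1 with hBdef
  have hB1 : (1:ℝ) ≤ B := le_max_right _ _
  have hB0 : (0:ℝ) < B := lt_of_lt_of_le one_pos hB1
  have hBΓ : ∀ a ∈ Icc m M, |1 / Real.Gamma (1-a)| ≤ B := by
    intro a ha
    have := hB' a ha
    rw [Real.norm_eq_abs, abs_of_nonneg (by positivity)] at this
    have := le_trans (le_add_of_nonneg_right (abs_nonneg _)) this
    exact this.trans (le_max_left _ _)
  have hBψ : ∀ a ∈ Icc m M, |digamma (1-a)| ≤ B := by
    intro a ha
    have := hB' a ha
    rw [Real.norm_eq_abs, abs_of_nonneg (by positivity)] at this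
    have := le_trans (le_add_of_nonneg_left (abs_nonneg _)) this
    exact this.trans (le_max_left _ _)
  set E : ℝ := Real.exp (L * (1 + T * |Real.log T|)) with hEdef
  have hE0 : 0 < E := Real.exp_pos _
  set C : ℝ := L * E * (2 * B^2 + B) with hCdef
  have hC0 : 0 < C := by positivity
  have h0mem : (0:ℝ) ∈ Icc (0:ℝ) T1 := ⟨le_refl 0, by linarith⟩
  set D : ℝ → ℝ := fun t => (t ^ (-(α t)) / Real.Gamma (1 - α t)) * (deriv α t)
      * (digamma (1 - α t) - Real.log t)
    - ((α t) * t ^ (-(α t)) / Real.Gamma (1 - α t)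
       - (α 0) * t ^ (-(α 0)) / Real.Gamma (1 - α 0)) / t with hDdef
  have hDer : ∀ t ∈ Ioc (0:ℝ) T, HasDerivAt (gtilde α) (D t) t := by
    intro t ht
    have hmem1 : t ∈ Icc (0:ℝ) T1 := ⟨ht.1.le, ht.2.trans hTT1.le⟩
    have hφ := hasDerivAt_closed α hsmooth ht.1 (hr1 t hmem1).1 (hr1 t hmem1).2 h00 h10
    refine hφ.congr_of_eventuallyEq ?_
    exact Filter.eventuallyEq_of_mem (Ioo_mem_nhds ht.1 (lt_of_le_of_lt ht.2 hTT1))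
      (fun x hx => closed_form α hsmooth hr1 hx.1 hx.2.le)
  have hbnd : ∀ t ∈ Ioc (0:ℝ) T, |D t| ≤ C * t ^ (-(α 0)) * (1 + |Real.log t|) := by
    intro t ht
    obtain ⟨ht0, htT⟩ := ht
    have hmem1 : t ∈ Icc (0:ℝ) T1 := ⟨ht0.le, htT.trans hTT1.le⟩
    have hαtm : α t ∈ Icc m M := hmem t hmem1
    have hα0m : α 0 ∈ Icc m M := hmem 0 h0mem
    have hLipt : |α t - α 0| ≤ L * t := hLip t ⟨ht0.le, htT⟩
    have hpos0 : (0:ℝ) ≤ t ^ (-(α 0)) := Real.rpow_nonneg ht0.le _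
    have hlog1 : (0:ℝ) ≤ 1 + |Real.log t| := by positivity
    -- bound on first term
    have e1 : |t ^ (-(α t)) / Real.Gamma (1 - α t)| ≤ E * t ^ (-(α 0)) * B := by
      rw [div_eq_mul_one_div, abs_mul, abs_of_nonneg (Real.rpow_nonneg ht0.le _)]
      have h1 : t ^ (-(α t)) ≤ E * t ^ (-(α 0)) := by
        rw [hEdef]; exact rpow_bound_aux ht0 htT hLipt hL.le
      exact mul_le_mul h1 (hBΓ _ hαtm) (abs_nonneg _) (by positivity)
    have e2 : |deriv α t| ≤ L := hαL t ⟨ht0.le, htT⟩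
    have e3 : |digamma (1 - α t) - Real.log t| ≤ B * (1 + |Real.log t|) := by
      have := hBψ _ hαtm
      have habs := abs_sub (digamma (1 - α t)) (Real.log t)
      nlinarith [abs_nonneg (Real.log t)]
    have hP : |(t ^ (-(α t)) / Real.Gamma (1 - α t)) * (deriv α t)
        * (digamma (1 - α t) - Real.log t)|
        ≤ L * B ^ 2 * E * (t ^ (-(α 0)) * (1 + |Real.log t|)) := by
      rw [abs_mul, abs_mul]
      calc |t ^ (-(α t)) / Real.Gamma (1 - α t)| * |deriv α t|
            * |digamma (1 - α t) - Real.log t|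
          ≤ (E * t ^ (-(α 0)) * B) * L * (B * (1 + |Real.log t|)) := by
            apply mul_le_mul _ e3 (abs_nonneg _) (by positivity)
            exact mul_le_mul e1 e2 (abs_nonneg _) (by positivity)
        _ = L * B ^ 2 * E * (t ^ (-(α 0)) * (1 + |Real.log t|)) := by ring
    -- MVT bound on second term
    have hQ : |α t * t ^ (-(α t)) / Real.Gamma (1 - α t)
        - α 0 * t ^ (-(α 0)) / Real.Gamma (1 - α 0)|
        ≤ ((B + B ^ 2) * E * (t ^ (-(α 0)) * (1 + |Real.log t|))) * (L * t) := by
      have hsub : uIcc (α 0) (α t) ⊆ Icc m M := Set.uIcc_subset_Icc hα0m hαtm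
      have key := (convex_uIcc (α 0) (α t)).norm_image_sub_le_of_norm_hasDerivWithin_le
        (f := fun a => a * (t ^ (-a) / Real.Gamma (1 - a)))
        (f' := fun a => t ^ (-a) / Real.Gamma (1 - a)
          * (1 + a * (digamma (1 - a) - Real.log t)))
        (C := (B + B ^ 2) * E * (t ^ (-(α 0)) * (1 + |Real.log t|)))
        (fun a ha => (hasDerivAt_F ht0 (lt_of_lt_of_le hm0 (hsub ha).1)
          (lt_of_le_of_lt (hsub ha).2 hM1)).hasDerivWithinAt)
        (fun a ha => ?_) left_mem_uIcc right_mem_uIcc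
      · rw [Real.norm_eq_abs, Real.norm_eq_abs] at key
        calc |α t * t ^ (-(α t)) / Real.Gamma (1 - α t)
            - α 0 * t ^ (-(α 0)) / Real.Gamma (1 - α 0)|
            = |α t * (t ^ (-(α t)) / Real.Gamma (1 - α t))
              - α 0 * (t ^ (-(α 0)) / Real.Gamma (1 - α 0))| := by
              rw [mul_div_assoc, mul_div_assoc]
          _ ≤ ((B + B ^ 2) * E * (t ^ (-(α 0)) * (1 + |Real.log t|))) * |α t - α 0| := key
          _ ≤ ((B + B ^ 2) * E * (t ^ (-(α 0)) * (1 + |Real.log t|))) * (L * t) := by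
              apply mul_le_mul_of_nonneg_left hLipt (by positivity)
      · -- the derivative bound on the segment
        have haM : a ∈ Icc m M := hsub ha
        have ha0 : 0 < a := lt_of_lt_of_le hm0 haM.1
        have ha1 : a < 1 := lt_of_le_of_lt haM.2 hM1
        have haα0 : |a - α 0| ≤ L * t := le_trans (abs_sub_left_of_mem_uIcc ha) hLipt
        have h1 : t ^ (-a) ≤ E * t ^ (-(α 0)) := by
          rw [hEdef]; exact rpow_bound_aux ht0 htT haα0 hL.le
        have h2 : |1 / Real.Gamma (1 - a)| ≤ B := hBΓ a haM
        have h3 : |1 + a * (digamma (1 - a) - Real.log t)| ≤ (1 + B) * (1 + |Real.log t|) := by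
          have hψa := hBψ a haM
          have habs1 := abs_add_le (1:ℝ) (a * (digamma (1 - a) - Real.log t))
          have habs2 : |a * (digamma (1 - a) - Real.log t)| ≤ |digamma (1 - a) - Real.log t| := by
            rw [abs_mul]
            have : |a| ≤ 1 := by rw [abs_of_pos ha0]; exact ha1.le
            nlinarith [abs_nonneg (digamma (1 - a) - Real.log t)]
          have habs3 := abs_sub (digamma (1 - a)) (Real.log t)
          simp only [abs_one] at habs1
          nlinarith [abs_nonneg (Real.log t), hB1]
        rw [Real.norm_eq_abs, abs_mul, div_eq_mul_one_div, abs_mul,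
          abs_of_nonneg (Real.rpow_nonneg ht0.le _)]
        calc t ^ (-a) * |1 / Real.Gamma (1 - a)|
              * |1 + a * (digamma (1 - a) - Real.log t)|
            ≤ (E * t ^ (-(α 0)) * B) * ((1 + B) * (1 + |Real.log t|)) := by
              apply mul_le_mul _ h3 (abs_nonneg _) (by positivity)
              exact mul_le_mul h1 h2 (abs_nonneg _) (by positivity)
          _ = (B + B ^ 2) * E * (t ^ (-(α 0)) * (1 + |Real.log t|)) := by ring
    -- combine
    have hsplit := abs_sub ((t ^ (-(α t)) / Real.Gamma (1 - α t)) * (deriv α t)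
        * (digamma (1 - α t) - Real.log t))
      (((α t) * t ^ (-(α t)) / Real.Gamma (1 - α t)
        - (α 0) * t ^ (-(α 0)) / Real.Gamma (1 - α 0)) / t)
    have hQt : |((α t) * t ^ (-(α t)) / Real.Gamma (1 - α t)
        - (α 0) * t ^ (-(α 0)) / Real.Gamma (1 - α 0)) / t|
        ≤ L * (B + B ^ 2) * E * (t ^ (-(α 0)) * (1 + |Real.log t|)) := by
      rw [abs_div, abs_of_pos ht0, div_le_iff₀ ht0]
      calc |α t * t ^ (-(α t)) / Real.Gamma (1 - α t)
          - α 0 * t ^ (-(α 0)) / Real.Gamma (1 - α 0)|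
          ≤ ((B + B ^ 2) * E * (t ^ (-(α 0)) * (1 + |Real.log t|))) * (L * t) := hQ
        _ = L * (B + B ^ 2) * E * (t ^ (-(α 0)) * (1 + |Real.log t|)) * t := by ring
    rw [hDdef]
    calc |(t ^ (-(α t)) / Real.Gamma (1 - α t)) * (deriv α t)
          * (digamma (1 - α t) - Real.log t)
        - ((α t) * t ^ (-(α t)) / Real.Gamma (1 - α t)
          - (α 0) * t ^ (-(α 0)) / Real.Gamma (1 - α 0)) / t|
        ≤ L * B ^ 2 * E * (t ^ (-(α 0)) * (1 + |Real.log t|))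
          + L * (B + B ^ 2) * E * (t ^ (-(α 0)) * (1 + |Real.log t|)) := by
          linarith [hsplit, hP, hQt]
      _ = C * t ^ (-(α 0)) * (1 + |Real.log t|) := by rw [hCdef]; ring
  refine ⟨fun t ht => (hDer t ht).differentiableAt, ⟨C, hC0, fun t ht => by
    rw [(hDer t ht).deriv]; exact hbnd t ht⟩, ?_⟩
  -- integrability
  set c : ℝ := (1 - α 0) / 2 with hcdef
  have hc0 : 0 < c := by rw [hcdef]; linarith
  have hlogb : ∀ t ∈ Ioc (0:ℝ) T, 1 + |Real.log t| ≤ (1 + |Real.log T|) + t ^ (-c) / c := by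
    intro t ht
    obtain ⟨ht0, htT⟩ := ht
    rcases le_or_gt t 1 with h | h
    · have hlog : Real.log t ≤ 0 := Real.log_nonpos ht0.le h
      have hkey : -Real.log t ≤ t ^ (-c) / c := by
        rw [le_div_iff₀ hc0]
        have hrp : 0 < t ^ (-c) := Real.rpow_pos_of_pos ht0 _
        have := Real.log_le_sub_one_of_pos hrp
        rw [Real.log_rpow ht0] at this
        nlinarith
      rw [abs_of_nonpos hlog]
      have : (0:ℝ) ≤ |Real.log T| := abs_nonneg _
      linarith
    · have hlogt : 0 ≤ Real.log t := Real.log_nonneg h.le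
      have hlogT : Real.log t ≤ Real.log T := Real.log_le_log ht0 htT
      rw [abs_of_nonneg hlogt]
      have h1 : Real.log t ≤ |Real.log T| := hlogT.trans (le_abs_self _)
      have h2 : 0 ≤ t ^ (-c) / c := by positivity
      linarith
  have hint : MeasureTheory.IntegrableOn
      (fun t : ℝ => C * (1 + |Real.log T|) * t ^ (-(α 0)) + C / c * t ^ (-(α 0) - c))
      (Set.Ioc 0 T) := by
    rw [← intervalIntegrable_iff_integrableOn_Ioc_of_le hT.le]
    apply IntervalIntegrable.add
    · exact (intervalIntegral.intervalIntegrable_rpow' (by linarith)).const_mul _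
    · refine (intervalIntegral.intervalIntegrable_rpow' ?_).const_mul _
      rw [hcdef]; linarith
  apply MeasureTheory.Integrable.mono' hint
    ((measurable_deriv _).aestronglyMeasurable)
  filter_upwards [MeasureTheory.ae_restrict_mem measurableSet_Ioc] with t ht
  rw [Real.norm_eq_abs, (hDer t ht).deriv]
  calc |D t| ≤ C * t ^ (-(α 0)) * (1 + |Real.log t|) := hbnd t ht
    _ ≤ C * t ^ (-(α 0)) * ((1 + |Real.log T|) + t ^ (-c) / c) := by
        exact mul_le_mul_of_nonneg_left (hlogb t ht)
          (mul_nonneg hC0.le (Real.rpow_nonneg ht.1.le _))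
    _ = C * (1 + |Real.log T|) * t ^ (-(α 0)) + C / c * (t ^ (-(α 0)) * t ^ (-c)) := by
        field_simp
    _ = C * (1 + |Real.log T|) * t ^ (-(α 0)) + C / c * t ^ (-(α 0) - c) := by
        rw [← Real.rpow_add ht.1]
        ring_nf
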